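/- Let F be a Finsler metric on an open set U ⊆ ℝⁿ and let V : U → ℝⁿ be a C^∞ vector field with V(x) ≠ 0 for all x ∈ U. Then there exists a unique C^∞ map Γ assigning to each x ∈ U a symmetric bilinear map Γₓ : ℝⁿ × ℝⁿ → ℝⁿ such that, defining for C^∞ vector fields X, Y on U the covariant derivative (∇^V_X Y)(x) := DY(x)[X(x)] + Γₓ(X(x), Y(x)) (where DY(x) is the Fréchet derivative of Y at x), the almost-g-compatibility identity holds for all C^∞ vector fields X, Y, Z on U and all x ∈ U: D[x ↦ g^x_{V(x)}(Y(x),Z(x))](x)[X(x)] = g^x_{V(x)}((∇^V_X Y)(x), Z(x)) + g^x_{V(x)}(Y(x), (∇^V_X Z)(x)) + 2·C^x_{V(x)}((∇^V_X V)(x), Y(x), Z(x)). (Symmetry of Γₓ encodes torsion-freeness: ∇^V_X Y − ∇^V_Y X = [X,Y]. This is the Chern connection of F associated with V.) -/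

import Mathlib

/-- The fundamental tensor of a Finsler metric `F` at base point `x` and direction `v`,
evaluated on `(u, w)`: one half of the second Fréchet (vertical) derivative of
`v ↦ F(x,v)²` at `v`. -/
noncomputable def gF {n : ℕ} (F : (Fin n → ℝ) → (Fin n → ℝ) → ℝ)
    (x v u w : Fin n → ℝ) : ℝ :=
  (1 / 2) * iteratedFDeriv ℝ 2 (fun y => F x y ^ 2) v ![u, w]

/-- The Cartan tensor of a Finsler metric `F` at base point `x` and direction `v`:
one quarter of the third Fréchet (vertical) derivative of `v ↦ F(x,v)²` at `v`. -/
noncomputable def cartanF {n : ℕ} (F : (Fin n → ℝ) → (Fin n → ℝ) → ℝ)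
    (x v w₁ w₂ w₃ : Fin n → ℝ) : ℝ :=
  (1 / 4) * iteratedFDeriv ℝ 3 (fun y => F x y ^ 2) v ![w₁, w₂, w₃]

/-- `F` is a Finsler metric on the set `U ⊆ ℝⁿ`. -/
structure IsFinslerMetric {n : ℕ} (U : Set (Fin n → ℝ))
    (F : (Fin n → ℝ) → (Fin n → ℝ) → ℝ) : Prop where
  smooth : ContDiffOn ℝ (⊤ : ℕ∞) (fun p : (Fin n → ℝ) × (Fin n → ℝ) => F p.1 p.2)
    (U ×ˢ {(0 : Fin n → ℝ)}ᶜ)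
  homog : ∀ x ∈ U, ∀ c : ℝ, 0 < c → ∀ v : Fin n → ℝ, F x (c • v) = c * F x v
  pos : ∀ x ∈ U, ∀ v : Fin n → ℝ, v ≠ 0 → 0 < F x v
  posdef : ∀ x ∈ U, ∀ v : Fin n → ℝ, v ≠ 0 → ∀ u : Fin n → ℝ, u ≠ 0 → 0 < gF F x v u u

/-- `Γ` is the Chern connection of the Finsler metric `F` on `U` associated with the
nonvanishing reference vector field `V`: a smooth field of symmetric bilinear maps such
that the covariant derivative `∇^V_X Y = DY[X] + Γ(X,Y)` is almost `g`-compatible. -/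
def IsChernConnection {n : ℕ} (U : Set (Fin n → ℝ))
    (F : (Fin n → ℝ) → (Fin n → ℝ) → ℝ) (V : (Fin n → ℝ) → (Fin n → ℝ))
    (Γ : (Fin n → ℝ) → (Fin n → ℝ) →ₗ[ℝ] (Fin n → ℝ) →ₗ[ℝ] (Fin n → ℝ)) : Prop :=
  (∀ x ∈ U, ∀ u w : Fin n → ℝ, Γ x u w = Γ x w u) ∧
  (∀ u w : Fin n → ℝ, ContDiffOn ℝ (⊤ : ℕ∞) (fun x => Γ x u w) U) ∧
  (∀ X Y Z : (Fin n → ℝ) → (Fin n → ℝ),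
    ContDiffOn ℝ (⊤ : ℕ∞) X U → ContDiffOn ℝ (⊤ : ℕ∞) Y U → ContDiffOn ℝ (⊤ : ℕ∞) Z U →
    ∀ x ∈ U,
      fderiv ℝ (fun y => gF F y (V y) (Y y) (Z y)) x (X x) =
        gF F x (V x) (fderiv ℝ Y x (X x) + Γ x (X x) (Y x)) (Z x) +
        gF F x (V x) (Y x) (fderiv ℝ Z x (X x) + Γ x (X x) (Z x)) +
        2 * cartanF F x (V x) (fderiv ℝ V x (X x) + Γ x (X x) (V x)) (Y x) (Z x))


open Filter Topology ContinuousLinearMap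

noncomputable instance nacg3 {A B C D : Type*} [NormedAddCommGroup A] [NormedSpace ℝ A]
    [NormedAddCommGroup B] [NormedSpace ℝ B] [NormedAddCommGroup C] [NormedSpace ℝ C]
    [NormedAddCommGroup D] [NormedSpace ℝ D] :
    NormedAddCommGroup (A →L[ℝ] B →L[ℝ] C →L[ℝ] D) :=
  ContinuousLinearMap.toNormedAddCommGroup (𝕜 := ℝ) (𝕜₂ := ℝ) (E := A)
    (F := B →L[ℝ] C →L[ℝ] D) (σ₁₂ := RingHom.id ℝ)

noncomputable instance ns3 {A B C D : Type*} [NormedAddCommGroup A] [NormedSpace ℝ A]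
    [NormedAddCommGroup B] [NormedSpace ℝ B] [NormedAddCommGroup C] [NormedSpace ℝ C]
    [NormedAddCommGroup D] [NormedSpace ℝ D] :
    NormedSpace ℝ (A →L[ℝ] B →L[ℝ] C →L[ℝ] D) :=
  ContinuousLinearMap.toNormedSpace (𝕜 := ℝ) (𝕜₂ := ℝ) (E := A)
    (F := B →L[ℝ] C →L[ℝ] D) (σ₁₂ := RingHom.id ℝ) (𝕜' := ℝ)

namespace Chern
variable {n : ℕ}
local notation "E" => (Fin n → ℝ)

noncomputable def QF (F : (Fin n → ℝ) → (Fin n → ℝ) → ℝ) :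
    ((Fin n → ℝ) × (Fin n → ℝ)) → ℝ := fun p => F p.1 p.2 ^ 2

noncomputable def D1 (F : (Fin n → ℝ) → (Fin n → ℝ) → ℝ) := fderiv ℝ (QF F)
noncomputable def D2 (F : (Fin n → ℝ) → (Fin n → ℝ) → ℝ) := fderiv ℝ (D1 F)
noncomputable def D3 (F : (Fin n → ℝ) → (Fin n → ℝ) → ℝ) := fderiv ℝ (D2 F)

noncomputable def jr : (Fin n → ℝ) →L[ℝ] (Fin n → ℝ) × (Fin n → ℝ) :=
  ContinuousLinearMap.inr ℝ _ _

@[simp] lemma jr_apply (w : Fin n → ℝ) : (jr : E →L[ℝ] E × E) w = (0, w) := rfl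

variable {F : (Fin n → ℝ) → (Fin n → ℝ) → ℝ} {Ω : Set ((Fin n → ℝ) × (Fin n → ℝ))}

lemma hasFDerivAt_pair (x z : Fin n → ℝ) :
    HasFDerivAt (fun y : Fin n → ℝ => ((x, y) : (Fin n → ℝ) × (Fin n → ℝ)))
      (jr : (Fin n → ℝ) →L[ℝ] (Fin n → ℝ) × (Fin n → ℝ)) z := by
  have h := HasFDerivAt.prodMk (hasFDerivAt_const (𝕜 := ℝ) x z) (hasFDerivAt_id z)
  exact h

section Vert

variable (hΩ : IsOpen Ω) (hQ : ∀ p ∈ Ω, ContDiffAt ℝ (⊤ : ℕ∞) (QF F) p)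

include hΩ hQ

lemma vert1 {x z : Fin n → ℝ} (hz : (x, z) ∈ Ω) :
    HasFDerivAt (fun y => QF F (x, y)) ((D1 F (x, z)).comp jr) z := by
  have hd : DifferentiableAt ℝ (QF F) (x, z) :=
    (hQ _ hz).differentiableAt (by simp)
  exact hd.hasFDerivAt.comp z (hasFDerivAt_pair x z)

lemma diffD1 {p : E × E} (hp : p ∈ Ω) : DifferentiableAt ℝ (D1 F) p :=
  ((hQ _ hp).fderiv_right (m := (⊤ : ℕ∞)) (by simp)).differentiableAt (by simp)

lemma diffD2 {p : E × E} (hp : p ∈ Ω) : DifferentiableAt ℝ (D2 F) p :=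
  ((((hQ _ hp).fderiv_right (m := (⊤ : ℕ∞)) (by simp)).fderiv_right (m := (⊤ : ℕ∞))
    (by simp))).differentiableAt (by simp)

lemma vert2 {x z : Fin n → ℝ} (hz : (x, z) ∈ Ω) (c : Fin n → ℝ) :
    HasFDerivAt (fun y => D1 F (x, y) (jr c))
      (((D2 F (x, z)).comp jr).flip (jr c)) z := by
  have h1 : HasFDerivAt (fun y => D1 F (x, y)) ((D2 F (x, z)).comp jr) z :=
    ((diffD1 hΩ hQ hz).hasFDerivAt).comp z (hasFDerivAt_pair x z)
  simpa using h1.clm_apply (hasFDerivAt_const (jr c) z)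

lemma vert3 {x z : Fin n → ℝ} (hz : (x, z) ∈ Ω) (b c : Fin n → ℝ) :
    HasFDerivAt (fun y => D2 F (x, y) (jr b) (jr c))
      ((((D3 F (x, z)).comp jr).flip (jr b)).flip (jr c)) z := by
  have h1 : HasFDerivAt (fun y => D2 F (x, y)) ((D3 F (x, z)).comp jr) z :=
    ((diffD2 hΩ hQ hz).hasFDerivAt).comp (g := D2 F) z (hasFDerivAt_pair x z)
  have h2 : HasFDerivAt (fun y => D2 F (x, y) (jr b))
      (((D3 F (x, z)).comp jr).flip (jr b)) z := by
    simpa using h1.clm_apply (hasFDerivAt_const (jr b) z)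
  simpa using h2.clm_apply (hasFDerivAt_const (jr c) z)

end Vert

section Vert2

variable (hΩ : IsOpen Ω) (hQ : ∀ p ∈ Ω, ContDiffAt ℝ (⊤ : ℕ∞) (QF F) p)
include hΩ hQ

lemma slice_nhds {x v : Fin n → ℝ} (hxv : (x, v) ∈ Ω) : ∀ᶠ z in 𝓝 v, (x, z) ∈ Ω := by
  have : IsOpen {z : Fin n → ℝ | (x, z) ∈ Ω} := hΩ.preimage (Continuous.prodMk_right x)
  exact this.mem_nhds hxv

omit hΩ in
lemma contDiffAt_slice {x v : Fin n → ℝ} (hxv : (x, v) ∈ Ω) :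
    ContDiffAt ℝ (⊤ : ℕ∞) (fun y => QF F (x, y)) v :=
  (hQ _ hxv).comp v ((contDiffAt_const (c := x)).prodMk contDiffAt_id)

lemma sndVert {x v : Fin n → ℝ} (hxv : (x, v) ∈ Ω) (u w : Fin n → ℝ) :
    iteratedFDeriv ℝ 2 (fun y => QF F (x, y)) v ![u, w] = D2 F (x, v) (jr u) (jr w) := by
  have hev := slice_nhds hΩ hQ hxv
  rw [iteratedFDeriv_two_apply]
  have hq := contDiffAt_slice hQ hxv
  have hdq : DifferentiableAt ℝ (fderiv ℝ (fun y => QF F (x, y))) v :=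
    (hq.fderiv_right (m := (⊤ : ℕ∞)) (by simp)).differentiableAt (by simp)
  have hA := hdq.hasFDerivAt.clm_apply (hasFDerivAt_const w v)
  have hB : (fun z => fderiv ℝ (fun y => QF F (x, y)) z w)
      =ᶠ[𝓝 v] (fun z => D1 F (x, z) (jr w)) := by
    filter_upwards [hev] with z hz
    rw [(vert1 hΩ hQ hz).fderiv]; rfl
  have hC := vert2 hΩ hQ hxv w
  have hEq := (hC.congr_of_eventuallyEq hB).unique hA
  have h2 := congrFun (congrArg DFunLike.coe hEq) u
  simp only [ContinuousLinearMap.flip_apply, ContinuousLinearMap.comp_apply,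
    ContinuousLinearMap.add_apply, ContinuousLinearMap.comp_zero,
    ContinuousLinearMap.zero_apply, zero_add] at h2
  simp only [Matrix.cons_val_zero, Matrix.cons_val_one, Matrix.head_cons]
  exact h2.symm

lemma trdVert {x v : Fin n → ℝ} (hxv : (x, v) ∈ Ω) (a b c : Fin n → ℝ) :
    iteratedFDeriv ℝ 3 (fun y => QF F (x, y)) v ![a, b, c]
      = D3 F (x, v) (jr a) (jr b) (jr c) := by
  have hev := slice_nhds hΩ hQ hxv
  have hq := contDiffAt_slice hQ hxv
  rw [iteratedFDeriv_succ_apply_left]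
  have hI2 : DifferentiableAt ℝ (iteratedFDeriv ℝ 2 (fun y => QF F (x, y))) v :=
    (hq.iteratedFDeriv_right (i := 2) (m := (⊤ : ℕ∞)) (by rw [← WithTop.coe_natCast, ← WithTop.coe_add]; exact WithTop.coe_le_coe.mpr le_top)).differentiableAt (by simp)
  have hA := hI2.hasFDerivAt.continuousMultilinear_apply_const ![b, c]
  have hB : (fun z => iteratedFDeriv ℝ 2 (fun y => QF F (x, y)) z ![b, c])
      =ᶠ[𝓝 v] (fun z => D2 F (x, z) (jr b) (jr c)) := by
    filter_upwards [hev] with z hz; exact sndVert hΩ hQ hz b c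
  have hC := vert3 hΩ hQ hxv b c
  have hEq := (hC.congr_of_eventuallyEq hB).unique hA
  have h2 := congrFun (congrArg DFunLike.coe hEq) a
  simp only [ContinuousLinearMap.flip_apply, ContinuousLinearMap.flipMultilinear_apply_apply] at h2
  simp only [Matrix.cons_val_zero, Fin.tail_def]
  rw [show (fun i : Fin 2 => (![a, b, c] : Fin 3 → Fin n → ℝ) i.succ) = ![b, c] by
    funext i; fin_cases i <;> rfl]
  exact h2.symm

omit hΩ in
lemma symD2 {p : (Fin n → ℝ) × (Fin n → ℝ)} (hp : p ∈ Ω) (ξ η : (Fin n → ℝ) × (Fin n → ℝ)) :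
    D2 F p ξ η = D2 F p η ξ :=
  ((hQ _ hp).isSymmSndFDerivAt (by rw [minSmoothness_of_isRCLikeNormedField]; exact WithTop.coe_le_coe.mpr (le_top : (2:ℕ∞) ≤ ⊤))) ξ η

omit hΩ in
lemma symD3_12 {p : (Fin n → ℝ) × (Fin n → ℝ)} (hp : p ∈ Ω)
    (ξ η : (Fin n → ℝ) × (Fin n → ℝ)) : D3 F p ξ η = D3 F p η ξ :=
  (((hQ _ hp).fderiv_right (m := (⊤ : ℕ∞)) (by simp)).isSymmSndFDerivAt (by rw [minSmoothness_of_isRCLikeNormedField]; exact WithTop.coe_le_coe.mpr (le_top : (2:ℕ∞) ≤ ⊤))) ξ η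

lemma symD3_23 {p : (Fin n → ℝ) × (Fin n → ℝ)} (hp : p ∈ Ω)
    (ξ η ζ : (Fin n → ℝ) × (Fin n → ℝ)) : D3 F p ξ η ζ = D3 F p ξ ζ η := by
  have hev : ∀ᶠ q in 𝓝 p, q ∈ Ω := hΩ.mem_nhds hp
  have hdD2 : DifferentiableAt ℝ (D2 F) p := diffD2 hΩ hQ hp
  have hA := (hdD2.hasFDerivAt.clm_apply (hasFDerivAt_const η p)).clm_apply
    (hasFDerivAt_const ζ p)
  have hB := (hdD2.hasFDerivAt.clm_apply (hasFDerivAt_const ζ p)).clm_apply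
    (hasFDerivAt_const η p)
  have hev2 : (fun q => D2 F q η ζ) =ᶠ[𝓝 p] (fun q => D2 F q ζ η) := by
    filter_upwards [hev] with q hq
    exact symD2 hQ hq η ζ
  have hEq := (hB.congr_of_eventuallyEq hev2).unique hA
  have h2 := congrFun (congrArg DFunLike.coe hEq) ξ
  simpa [D3] using h2.symm

end Vert2

section Homog

variable (hΩ : IsOpen Ω) (hQ : ∀ p ∈ Ω, ContDiffAt ℝ (⊤ : ℕ∞) (QF F) p) {x : Fin n → ℝ}
variable (hsl : ∀ z : Fin n → ℝ, z ≠ 0 → (x, z) ∈ Ω)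
variable (hhom : ∀ c : ℝ, 0 < c → ∀ y : Fin n → ℝ, QF F (x, c • y) = c ^ 2 * QF F (x, y))

include hΩ hQ hsl hhom

omit hΩ in
lemma scale1 {c : ℝ} (hc : 0 < c) {w : Fin n → ℝ} (hw : w ≠ 0) :
    fderiv ℝ (fun y => QF F (x, y)) (c • w) = c • fderiv ℝ (fun y => QF F (x, y)) w := by
  set q : (Fin n → ℝ) → ℝ := fun y => QF F (x, y) with hqdef
  have hcw : c • w ≠ 0 := smul_ne_zero (ne_of_gt hc) hw
  have hdcw : HasFDerivAt q (fderiv ℝ q (c • w)) (c • w) :=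
    (((contDiffAt_slice hQ (hsl _ hcw))).differentiableAt (by simp)).hasFDerivAt
  have hsm : HasFDerivAt (fun z : Fin n → ℝ => c • z)
      (c • ContinuousLinearMap.id ℝ (Fin n → ℝ)) w := by
    have := (c • ContinuousLinearMap.id ℝ (Fin n → ℝ)).hasFDerivAt (x := w)
    simpa using this
  have hcomp := hdcw.comp w hsm
  rw [show q ∘ (HSMul.hSMul c) = fun z => c ^ 2 * q z from funext fun z => hhom c hc z] at hcomp
  have hdw : HasFDerivAt q (fderiv ℝ q w) w :=
    (((contDiffAt_slice hQ (hsl _ hw))).differentiableAt (by simp)).hasFDerivAt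
  have hrhs : HasFDerivAt (fun z => c ^ 2 * q z) ((c ^ 2) • fderiv ℝ q w) w := hdw.const_smul (c ^ 2)
  have hEq := hcomp.unique hrhs
  ext z
  have h2 := congrFun (congrArg DFunLike.coe hEq) (c⁻¹ • z)
  simp only [ContinuousLinearMap.coe_comp', Function.comp_apply, ContinuousLinearMap.coe_smul',
    Pi.smul_apply, ContinuousLinearMap.coe_id', id_eq, smul_eq_mul] at h2 ⊢
  rw [smul_smul, mul_inv_cancel₀ (ne_of_gt hc), one_smul] at h2
  rw [h2, map_smul, smul_eq_mul]
  field_simp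

omit hΩ in
lemma scale2 {c : ℝ} (hc : 0 < c) {w : Fin n → ℝ} (hw : w ≠ 0) :
    fderiv ℝ (fderiv ℝ (fun y => QF F (x, y))) (c • w)
      = fderiv ℝ (fderiv ℝ (fun y => QF F (x, y))) w := by
  set q : (Fin n → ℝ) → ℝ := fun y => QF F (x, y) with hqdef
  have hcw : c • w ≠ 0 := smul_ne_zero (ne_of_gt hc) hw
  have hd2cw : HasFDerivAt (fderiv ℝ q) (fderiv ℝ (fderiv ℝ q) (c • w)) (c • w) :=
    (((contDiffAt_slice hQ (hsl _ hcw))).fderiv_right (m := (⊤ : ℕ∞))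
      (by simp)).differentiableAt (by simp) |>.hasFDerivAt
  have hsm : HasFDerivAt (fun z : Fin n → ℝ => c • z)
      (c • ContinuousLinearMap.id ℝ (Fin n → ℝ)) w := by
    have := (c • ContinuousLinearMap.id ℝ (Fin n → ℝ)).hasFDerivAt (x := w)
    simpa using this
  have hcomp := hd2cw.comp w hsm
  have hev : (fun z => fderiv ℝ q (c • z)) =ᶠ[𝓝 w] fun z => c • fderiv ℝ q z := by
    have : ∀ᶠ z in 𝓝 w, z ≠ 0 := (isOpen_compl_singleton).mem_nhds hw
    filter_upwards [this] with z hz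
    exact scale1 hQ hsl hhom hc hz
  have hd2w : HasFDerivAt (fderiv ℝ q) (fderiv ℝ (fderiv ℝ q) w) w :=
    (((contDiffAt_slice hQ (hsl _ hw))).fderiv_right (m := (⊤ : ℕ∞))
      (by simp)).differentiableAt (by simp) |>.hasFDerivAt
  have hrhs : HasFDerivAt (fun z => c • fderiv ℝ q z)
      (c • fderiv ℝ (fderiv ℝ q) w) w := hd2w.const_smul c
  have hEq := ((hrhs.congr_of_eventuallyEq hev)).unique hcomp
  ext z ζ
  have h2 := congrFun (congrArg DFunLike.coe hEq.symm) (c⁻¹ • z)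
  simp only [ContinuousLinearMap.coe_comp', Function.comp_apply, ContinuousLinearMap.coe_smul',
    Pi.smul_apply, ContinuousLinearMap.coe_id', id_eq] at h2
  rw [smul_smul, mul_inv_cancel₀ (ne_of_gt hc), one_smul, map_smul, smul_smul,
    mul_inv_cancel₀ (ne_of_gt hc), one_smul] at h2
  exact congrFun (congrArg DFunLike.coe h2) ζ

lemma cartan_vanish {v : Fin n → ℝ} (hv : v ≠ 0) (b c : Fin n → ℝ) :
    D3 F (x, v) (jr v) (jr b) (jr c) = 0 := by
  set q : (Fin n → ℝ) → ℝ := fun y => QF F (x, y) with hqdef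
  rw [← trdVert hΩ hQ (hsl _ hv)]
  -- reduce to fderiv of second derivative applied
  have hq := contDiffAt_slice hQ (hsl _ hv)
  have hI2 : DifferentiableAt ℝ (iteratedFDeriv ℝ 2 q) v :=
    (hq.iteratedFDeriv_right (i := 2) (m := (⊤ : ℕ∞)) (by rw [← WithTop.coe_natCast, ← WithTop.coe_add]; exact WithTop.coe_le_coe.mpr le_top)).differentiableAt (by simp)
  have hd2diff : DifferentiableAt ℝ (fderiv ℝ (fderiv ℝ q)) v :=
    ((hq.fderiv_right (m := (⊤ : ℕ∞)) (by simp)).fderiv_right (m := (⊤ : ℕ∞))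
      (by simp)).differentiableAt (by simp)
  -- the curve t ↦ d2 (t • v) is locally constant at 1
  have hcurve : (fun t : ℝ => fderiv ℝ (fderiv ℝ q) (t • v))
      =ᶠ[𝓝 (1 : ℝ)] fun _ => fderiv ℝ (fderiv ℝ q) v := by
    have : ∀ᶠ t : ℝ in 𝓝 1, 0 < t := (isOpen_Ioi (a := (0:ℝ))).mem_nhds (by norm_num)
    filter_upwards [this] with t ht
    have := scale2 hQ hsl hhom ht hv
    simpa using this
  have hsmul : HasDerivAt (fun t : ℝ => t • v) v 1 := by
    simpa using (hasDerivAt_id (1 : ℝ)).smul_const v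
  have hd2v : DifferentiableAt ℝ (fderiv ℝ (fderiv ℝ q)) ((1:ℝ) • v) := by
    simpa using hd2diff
  have hchain : HasDerivAt (fun t : ℝ => fderiv ℝ (fderiv ℝ q) (t • v))
      (fderiv ℝ (fderiv ℝ (fderiv ℝ q)) v v) 1 := by
    have := (hd2v.hasFDerivAt).comp_hasDerivAt (l := fderiv ℝ (fderiv ℝ q)) 1 hsmul
    simpa [Function.comp_def] using this
  have hconst : HasDerivAt (fun t : ℝ => fderiv ℝ (fderiv ℝ q) (t • v))
      (0 : (Fin n → ℝ) →L[ℝ] (Fin n → ℝ) →L[ℝ] ℝ) 1 :=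
    (hasDerivAt_const 1 _).congr_of_eventuallyEq hcurve
  have hzero : fderiv ℝ (fderiv ℝ (fderiv ℝ q)) v v = 0 :=
    HasDerivAt.unique (𝕜 := ℝ) (F := (Fin n → ℝ) →L[ℝ] (Fin n → ℝ) →L[ℝ] ℝ) hchain hconst
  -- now convert iteratedFDeriv 3 to this triple fderiv
  rw [iteratedFDeriv_succ_apply_left]
  have happly := hI2.hasFDerivAt.continuousMultilinear_apply_const ![b, c]
  -- fderiv (fun z => iterated 2 q z ![b,c]) v = flipMultilinear ...
  have hfun : (fun z => iteratedFDeriv ℝ 2 q z ![b, c])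
      = fun z => fderiv ℝ (fderiv ℝ q) z b c := by
    funext z; rw [iteratedFDeriv_two_apply]; simp
  have hBC : HasFDerivAt (fun z => fderiv ℝ (fderiv ℝ q) z b c)
      ((fderiv ℝ (iteratedFDeriv ℝ 2 q) v).flipMultilinear ![b, c]) v := by
    rw [← hfun]; exact happly
  have hBC2 : HasFDerivAt (fun z => fderiv ℝ (fderiv ℝ q) z b c)
      (((fderiv ℝ (fderiv ℝ (fderiv ℝ q)) v).flip b).flip c) v := by
    have h1 := hd2diff.hasFDerivAt.clm_apply (hasFDerivAt_const b v)
    have h2 := h1.clm_apply (hasFDerivAt_const c v)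
    simpa using h2
  have hEq := hBC.unique hBC2
  have h3 := congrFun (congrArg DFunLike.coe hEq) v
  simp only [ContinuousLinearMap.flipMultilinear_apply_apply, ContinuousLinearMap.flip_apply] at h3
  rw [show (![v, b, c] : Fin 3 → Fin n → ℝ) 0 = v from rfl]
  rw [show Fin.tail (![v, b, c] : Fin 3 → Fin n → ℝ) = ![b, c] by
    funext i; fin_cases i <;> rfl]
  rw [h3, hzero]
  simp

end Homog

/-! ### The pointwise tensors and the metric inverse -/

noncomputable def ee (i : Fin n) : Fin n → ℝ := Pi.single i 1

noncomputable def bb (F : (Fin n → ℝ) → (Fin n → ℝ) → ℝ) (V : (Fin n → ℝ) → (Fin n → ℝ))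
    (x u w : Fin n → ℝ) : ℝ := D2 F (x, V x) (jr u) (jr w)

noncomputable def cc (F : (Fin n → ℝ) → (Fin n → ℝ) → ℝ) (V : (Fin n → ℝ) → (Fin n → ℝ))
    (x a b c : Fin n → ℝ) : ℝ := D3 F (x, V x) (jr a) (jr b) (jr c)

noncomputable def TT (F : (Fin n → ℝ) → (Fin n → ℝ) → ℝ) (V : (Fin n → ℝ) → (Fin n → ℝ))
    (x : Fin n → ℝ) := fderiv ℝ (fun x' => D2 F (x', V x')) x

noncomputable def ww (F : (Fin n → ℝ) → (Fin n → ℝ) → ℝ) (V : (Fin n → ℝ) → (Fin n → ℝ))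
    (x u y z : Fin n → ℝ) : ℝ := TT F V x u (jr y) (jr z)

noncomputable def Kos (F : (Fin n → ℝ) → (Fin n → ℝ) → ℝ) (V : (Fin n → ℝ) → (Fin n → ℝ))
    (x u y z : Fin n → ℝ) : ℝ :=
  ww F V x u y z + ww F V x y z u - ww F V x z u y

noncomputable def Gmat (F : (Fin n → ℝ) → (Fin n → ℝ) → ℝ) (V : (Fin n → ℝ) → (Fin n → ℝ))
    (x : Fin n → ℝ) : Fin n → Fin n → ℝ := fun i j => bb F V x (ee j) (ee i)

noncomputable def Gmap (F : (Fin n → ℝ) → (Fin n → ℝ) → ℝ) (V : (Fin n → ℝ) → (Fin n → ℝ))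
    (x : Fin n → ℝ) : (Fin n → ℝ) →L[ℝ] (Fin n → ℝ) :=
  LinearMap.toContinuousLinearMap (Matrix.of (Gmat F V x)).mulVecLin

noncomputable def Ginv (F : (Fin n → ℝ) → (Fin n → ℝ) → ℝ) (V : (Fin n → ℝ) → (Fin n → ℝ))
    (x : Fin n → ℝ) : (Fin n → ℝ) →L[ℝ] (Fin n → ℝ) := Ring.inverse (Gmap F V x)

noncomputable def sol (F : (Fin n → ℝ) → (Fin n → ℝ) → ℝ) (V : (Fin n → ℝ) → (Fin n → ℝ))
    (x : Fin n → ℝ) (t : (Fin n → ℝ) → ℝ) : Fin n → ℝ :=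
  Ginv F V x (fun i => t (ee i))

section Linearity
variable {F : (Fin n → ℝ) → (Fin n → ℝ) → ℝ} {V : (Fin n → ℝ) → (Fin n → ℝ)}
  {x : Fin n → ℝ}

lemma bb_add_left (u₁ u₂ w : Fin n → ℝ) :
    bb F V x (u₁ + u₂) w = bb F V x u₁ w + bb F V x u₂ w := by
  simp only [bb]; rw [map_add, map_add, ContinuousLinearMap.add_apply]

lemma bb_smul_left (c : ℝ) (u w : Fin n → ℝ) : bb F V x (c • u) w = c * bb F V x u w := by
  simp only [bb]; rw [map_smul, map_smul]; rfl

lemma bb_add_right (u w₁ w₂ : Fin n → ℝ) :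
    bb F V x u (w₁ + w₂) = bb F V x u w₁ + bb F V x u w₂ := by
  simp only [bb]; rw [map_add, map_add]

lemma bb_smul_right (c : ℝ) (u w : Fin n → ℝ) : bb F V x u (c • w) = c * bb F V x u w := by
  simp only [bb]; rw [map_smul, map_smul]; rfl

lemma bb_sum_left {ι : Type*} (s : Finset ι) (f : ι → (Fin n → ℝ)) (w : Fin n → ℝ) :
    bb F V x (∑ j ∈ s, f j) w = ∑ j ∈ s, bb F V x (f j) w := by
  simp only [bb]; rw [map_sum, map_sum, ContinuousLinearMap.sum_apply]

lemma bb_sum_right {ι : Type*} (s : Finset ι) (u : Fin n → ℝ) (f : ι → (Fin n → ℝ)) :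
    bb F V x u (∑ j ∈ s, f j) = ∑ j ∈ s, bb F V x u (f j) := by
  simp only [bb]; rw [map_sum, map_sum]

lemma eq_sum_ee (u : Fin n → ℝ) : u = ∑ j, u j • ee j := by
  rw [show (fun j : Fin n => u j • ee j) = fun j => Pi.single j (u j) from
    funext fun j => by simp [ee, ← Pi.single_smul]]
  exact (Finset.univ_sum_single u).symm

lemma bb_basis_left (u w : Fin n → ℝ) : bb F V x u w = ∑ j, u j * bb F V x (ee j) w := by
  conv_lhs => rw [eq_sum_ee u]
  rw [bb_sum_left]
  exact Finset.sum_congr rfl fun j _ => bb_smul_left _ _ _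

lemma bb_basis_right (u w : Fin n → ℝ) : bb F V x u w = ∑ j, w j * bb F V x u (ee j) := by
  conv_lhs => rw [eq_sum_ee w]
  rw [bb_sum_right]
  exact Finset.sum_congr rfl fun j _ => bb_smul_right _ _ _

lemma Gmap_apply (u : Fin n → ℝ) (i : Fin n) : Gmap F V x u i = bb F V x u (ee i) := by
  rw [bb_basis_left]
  simp only [Gmap, Gmat, LinearMap.coe_toContinuousLinearMap', Matrix.mulVecLin_apply]
  simp [Matrix.mulVec, dotProduct, Gmat, mul_comm]

end Linearity

section Invert

variable {U : Set (Fin n → ℝ)} {F : (Fin n → ℝ) → (Fin n → ℝ) → ℝ}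
  {V : (Fin n → ℝ) → (Fin n → ℝ)}
variable (hU : IsOpen U) (hF : IsFinslerMetric U F) (hV0 : ∀ x ∈ U, V x ≠ 0)
variable {x : Fin n → ℝ} (hx : x ∈ U)

include hU in
lemma omega_isOpen : IsOpen (U ×ˢ ({(0 : Fin n → ℝ)}ᶜ : Set (Fin n → ℝ))) :=
  IsOpen.prod hU isOpen_compl_singleton

omit hV0 in
include hU hF in
lemma hQ_all : ∀ p ∈ (U ×ˢ ({(0 : Fin n → ℝ)}ᶜ : Set (Fin n → ℝ))),
    ContDiffAt ℝ (⊤ : ℕ∞) (QF F) p := by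
  intro p hp
  have h := hF.smooth.contDiffAt ((omega_isOpen hU).mem_nhds hp)
  exact h.pow 2

include hV0 in
lemma mem_omega (hx : x ∈ U) :
    (x, V x) ∈ U ×ˢ ({(0 : Fin n → ℝ)}ᶜ : Set (Fin n → ℝ)) :=
  Set.mem_prod.mpr ⟨hx, by simpa using hV0 x hx⟩

include hU hF hV0 hx

lemma gF_eq_bb (u w : Fin n → ℝ) : gF F x (V x) u w = (1 / 2) * bb F V x u w := by
  have hxv := mem_omega hV0 hx
  rw [gF, bb, show (fun y => F x y ^ 2) = fun y => QF F (x, y) from rfl,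
    sndVert (omega_isOpen hU) (hQ_all hU hF) hxv]

lemma cartanF_eq_cc (a b c : Fin n → ℝ) :
    cartanF F x (V x) a b c = (1 / 4) * cc F V x a b c := by
  have hxv := mem_omega hV0 hx
  rw [cartanF, cc, show (fun y => F x y ^ 2) = fun y => QF F (x, y) from rfl,
    trdVert (omega_isOpen hU) (hQ_all hU hF) hxv]

lemma bb_pos (u : Fin n → ℝ) (hu : u ≠ 0) : 0 < bb F V x u u := by
  have h := hF.posdef x hx (V x) (hV0 x hx) u hu
  rw [gF_eq_bb hU hF hV0 hx] at h
  linarith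

lemma bb_symm (u w : Fin n → ℝ) : bb F V x u w = bb F V x w u :=
  symD2 (Ω := U ×ˢ ({(0 : Fin n → ℝ)}ᶜ : Set (Fin n → ℝ))) (hQ_all hU hF)
    (mem_omega hV0 hx) _ _

lemma Gmap_injective : Function.Injective (Gmap F V x) := by
  intro a b hab
  by_contra hne
  have hnz : a - b ≠ 0 := sub_ne_zero.mpr hne
  have h0 : Gmap F V x (a - b) = 0 := by rw [map_sub, hab, sub_self]
  have hbz : ∀ i, bb F V x (a - b) (ee i) = 0 := by
    intro i; rw [← Gmap_apply]; rw [h0]; rfl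
  have : bb F V x (a - b) (a - b) = 0 := by
    rw [bb_basis_right]
    simp [hbz]
  exact absurd this (ne_of_gt (bb_pos hU hF hV0 hx _ hnz))

lemma isUnit_Gmap : IsUnit (Gmap F V x) := by
  have hinj : Function.Injective ((Gmap F V x : (Fin n → ℝ) →ₗ[ℝ] (Fin n → ℝ))) :=
    Gmap_injective hU hF hV0 hx
  have hsurj : Function.Surjective ((Gmap F V x : (Fin n → ℝ) →ₗ[ℝ] (Fin n → ℝ))) :=
    LinearMap.injective_iff_surjective.mp hinj
  let eL : (Fin n → ℝ) ≃ₗ[ℝ] (Fin n → ℝ) :=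
    LinearEquiv.ofBijective _ ⟨hinj, hsurj⟩
  refine ⟨⟨Gmap F V x, LinearMap.toContinuousLinearMap (eL.symm : (Fin n → ℝ) →ₗ[ℝ] (Fin n → ℝ)),
    ?_, ?_⟩, rfl⟩
  · apply ContinuousLinearMap.ext; intro z
    have : Gmap F V x (eL.symm z) = z := eL.apply_symm_apply z
    simpa [ContinuousLinearMap.mul_apply] using this
  · apply ContinuousLinearMap.ext; intro z
    have : eL.symm (Gmap F V x z) = z := eL.symm_apply_apply z
    simpa [ContinuousLinearMap.mul_apply] using this

lemma Gmap_Ginv (w : Fin n → ℝ) : Gmap F V x (Ginv F V x w) = w := by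
  have h := Ring.mul_inverse_cancel _ (isUnit_Gmap hU hF hV0 hx)
  have h2 := congrFun (congrArg DFunLike.coe h) w
  simpa [Ginv, ContinuousLinearMap.mul_apply] using h2

lemma sol_spec (t : (Fin n → ℝ) → ℝ) (ht : IsLinearMap ℝ t) (z : Fin n → ℝ) :
    bb F V x (sol F V x t) z = t z := by
  have hbase : ∀ i, bb F V x (sol F V x t) (ee i) = t (ee i) := by
    intro i
    rw [← Gmap_apply, sol, Gmap_Ginv hU hF hV0 hx]
  rw [bb_basis_right]
  let L : ((Fin n → ℝ) →ₗ[ℝ] ℝ) := IsLinearMap.mk' t ht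
  have hz : t z = ∑ j, z j * t (ee j) := by
    have : t z = L z := rfl
    rw [this]
    conv_lhs => rw [eq_sum_ee z]
    rw [map_sum]
    exact Finset.sum_congr rfl fun j _ => by simp [L]
  rw [hz]
  exact Finset.sum_congr rfl fun j _ => by rw [hbase j]

end Invert

/-! ### Linearity of the tensors, symmetries, construction of Γ -/

section MoreLin
variable {F : (Fin n → ℝ) → (Fin n → ℝ) → ℝ} {V : (Fin n → ℝ) → (Fin n → ℝ)}
  {x : Fin n → ℝ}

lemma cc_add1 (a₁ a₂ b c : Fin n → ℝ) :
    cc F V x (a₁ + a₂) b c = cc F V x a₁ b c + cc F V x a₂ b c := by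
  simp only [cc]; rw [map_add, map_add, ContinuousLinearMap.add_apply,
    ContinuousLinearMap.add_apply]

lemma cc_smul1 (r : ℝ) (a b c : Fin n → ℝ) : cc F V x (r • a) b c = r * cc F V x a b c := by
  simp only [cc]; rw [map_smul, map_smul]; rfl

lemma cc_add2 (a b₁ b₂ c : Fin n → ℝ) :
    cc F V x a (b₁ + b₂) c = cc F V x a b₁ c + cc F V x a b₂ c := by
  simp only [cc]; rw [map_add, map_add, ContinuousLinearMap.add_apply]

lemma cc_smul2 (r : ℝ) (a b c : Fin n → ℝ) : cc F V x a (r • b) c = r * cc F V x a b c := by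
  simp only [cc]; rw [map_smul, map_smul]; rfl

lemma cc_add3 (a b c₁ c₂ : Fin n → ℝ) :
    cc F V x a b (c₁ + c₂) = cc F V x a b c₁ + cc F V x a b c₂ := by
  simp only [cc]; rw [map_add, map_add]

lemma cc_smul3 (r : ℝ) (a b c : Fin n → ℝ) : cc F V x a b (r • c) = r * cc F V x a b c := by
  simp only [cc]; rw [map_smul, map_smul]; rfl

lemma ww_add1 (u₁ u₂ y z : Fin n → ℝ) :
    ww F V x (u₁ + u₂) y z = ww F V x u₁ y z + ww F V x u₂ y z := by
  simp only [ww]; rw [map_add, ContinuousLinearMap.add_apply, ContinuousLinearMap.add_apply]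

lemma ww_smul1 (r : ℝ) (u y z : Fin n → ℝ) : ww F V x (r • u) y z = r * ww F V x u y z := by
  simp only [ww]; rw [map_smul]; rfl

lemma ww_add2 (u y₁ y₂ z : Fin n → ℝ) :
    ww F V x u (y₁ + y₂) z = ww F V x u y₁ z + ww F V x u y₂ z := by
  simp only [ww]; rw [map_add, map_add, ContinuousLinearMap.add_apply]

lemma ww_smul2 (r : ℝ) (u y z : Fin n → ℝ) : ww F V x u (r • y) z = r * ww F V x u y z := by
  simp only [ww]; rw [map_smul, map_smul]; rfl

lemma ww_add3 (u y z₁ z₂ : Fin n → ℝ) :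
    ww F V x u y (z₁ + z₂) = ww F V x u y z₁ + ww F V x u y z₂ := by
  simp only [ww]; rw [map_add, map_add]

lemma ww_smul3 (r : ℝ) (u y z : Fin n → ℝ) : ww F V x u y (r • z) = r * ww F V x u y z := by
  simp only [ww]; rw [map_smul, map_smul]; rfl

end MoreLin

/-! ### The Christoffel data -/

noncomputable def NvD (F : (Fin n → ℝ) → (Fin n → ℝ) → ℝ) (V : (Fin n → ℝ) → (Fin n → ℝ))
    (x : Fin n → ℝ) : Fin n → ℝ :=
  fderiv ℝ V x (V x) + sol F V x (fun z => (1 / 2) * Kos F V x (V x) (V x) z)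

noncomputable def Gamv (F : (Fin n → ℝ) → (Fin n → ℝ) → ℝ) (V : (Fin n → ℝ) → (Fin n → ℝ))
    (x u : Fin n → ℝ) : Fin n → ℝ :=
  sol F V x (fun z => (1 / 2) * (Kos F V x u (V x) z - cc F V x (NvD F V x) u z))

noncomputable def NN (F : (Fin n → ℝ) → (Fin n → ℝ) → ℝ) (V : (Fin n → ℝ) → (Fin n → ℝ))
    (x u : Fin n → ℝ) : Fin n → ℝ :=
  fderiv ℝ V x u + Gamv F V x u

noncomputable def tau (F : (Fin n → ℝ) → (Fin n → ℝ) → ℝ) (V : (Fin n → ℝ) → (Fin n → ℝ))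
    (x u y z : Fin n → ℝ) : ℝ :=
  (1 / 2) * (Kos F V x u y z - cc F V x (NN F V x u) y z - cc F V x (NN F V x y) z u
    + cc F V x (NN F V x z) u y)

noncomputable def Gam (F : (Fin n → ℝ) → (Fin n → ℝ) → ℝ) (V : (Fin n → ℝ) → (Fin n → ℝ))
    (x u y : Fin n → ℝ) : Fin n → ℝ :=
  sol F V x (tau F V x u y)

section SolCongr
variable {F : (Fin n → ℝ) → (Fin n → ℝ) → ℝ} {V : (Fin n → ℝ) → (Fin n → ℝ)}
  {x : Fin n → ℝ}

lemma sol_congr {t₁ t₂ : (Fin n → ℝ) → ℝ} (h : ∀ w, t₁ w = t₂ w) :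
    sol F V x t₁ = sol F V x t₂ := by
  simp only [sol]; congr 1; funext i; exact h _

lemma sol_congr_add {t₁ t₂ t₃ : (Fin n → ℝ) → ℝ} (h : ∀ w, t₃ w = t₁ w + t₂ w) :
    sol F V x t₃ = sol F V x t₁ + sol F V x t₂ := by
  simp only [sol]
  rw [show (fun i => t₃ (ee i)) = (fun i => t₁ (ee i)) + (fun i => t₂ (ee i)) from
    funext fun i => h _]
  exact map_add _ _ _

lemma sol_congr_smul {c : ℝ} {t₁ t₃ : (Fin n → ℝ) → ℝ} (h : ∀ w, t₃ w = c * t₁ w) :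
    sol F V x t₃ = c • sol F V x t₁ := by
  simp only [sol]
  rw [show (fun i => t₃ (ee i)) = c • (fun i => t₁ (ee i)) from
    funext fun i => h _]
  exact map_smul _ _ _

lemma Gamv_add (u₁ u₂ : Fin n → ℝ) :
    Gamv F V x (u₁ + u₂) = Gamv F V x u₁ + Gamv F V x u₂ := by
  refine sol_congr_add fun w => ?_
  rw [show Kos F V x (u₁ + u₂) (V x) w
      = Kos F V x u₁ (V x) w + Kos F V x u₂ (V x) w by
    simp only [Kos, ww_add1, ww_add2, ww_add3]; ring]
  rw [cc_add2]; ring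

lemma Gamv_smul (r : ℝ) (u : Fin n → ℝ) : Gamv F V x (r • u) = r • Gamv F V x u := by
  refine sol_congr_smul fun w => ?_
  rw [show Kos F V x (r • u) (V x) w = r * Kos F V x u (V x) w by
    simp only [Kos, ww_smul1, ww_smul2, ww_smul3]; ring]
  rw [cc_smul2]; ring

lemma NN_add (u₁ u₂ : Fin n → ℝ) : NN F V x (u₁ + u₂) = NN F V x u₁ + NN F V x u₂ := by
  simp only [NN, map_add, Gamv_add]; abel

lemma NN_smul (r : ℝ) (u : Fin n → ℝ) : NN F V x (r • u) = r • NN F V x u := by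
  simp only [NN, map_smul, Gamv_smul, smul_add]

lemma Kos_lin3 (u y : Fin n → ℝ) : IsLinearMap ℝ (fun z => Kos F V x u y z) := by
  constructor
  · intro a b; simp only [Kos, ww_add1, ww_add2, ww_add3]; ring
  · intro r a; simp only [Kos, ww_smul1, ww_smul2, ww_smul3, smul_eq_mul]; ring

lemma tau_lin3 (u y : Fin n → ℝ) : IsLinearMap ℝ (fun z => tau F V x u y z) := by
  constructor
  · intro a b
    simp only [tau, (Kos_lin3 u y).map_add, cc_add3, cc_add2, NN_add, cc_add1]
    ring
  · intro r a
    simp only [tau, (Kos_lin3 u y).map_smul, cc_smul3, cc_smul2, NN_smul, cc_smul1,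
      smul_eq_mul]
    ring

lemma Gam_add_left (u₁ u₂ y : Fin n → ℝ) :
    Gam F V x (u₁ + u₂) y = Gam F V x u₁ y + Gam F V x u₂ y := by
  refine sol_congr_add fun w => ?_
  simp only [tau, show Kos F V x (u₁ + u₂) y w = Kos F V x u₁ y w + Kos F V x u₂ y w by
      simp only [Kos, ww_add1, ww_add2, ww_add3]; ring,
    NN_add, cc_add1, cc_add2, cc_add3]
  ring

lemma Gam_smul_left (r : ℝ) (u y : Fin n → ℝ) :
    Gam F V x (r • u) y = r • Gam F V x u y := by
  refine sol_congr_smul fun w => ?_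
  simp only [tau, show Kos F V x (r • u) y w = r * Kos F V x u y w by
      simp only [Kos, ww_smul1, ww_smul2, ww_smul3]; ring,
    NN_smul, cc_smul1, cc_smul2, cc_smul3]
  ring

lemma Gam_add_right (u y₁ y₂ : Fin n → ℝ) :
    Gam F V x u (y₁ + y₂) = Gam F V x u y₁ + Gam F V x u y₂ := by
  refine sol_congr_add fun w => ?_
  simp only [tau, show Kos F V x u (y₁ + y₂) w = Kos F V x u y₁ w + Kos F V x u y₂ w by
      simp only [Kos, ww_add1, ww_add2, ww_add3]; ring,
    NN_add, cc_add1, cc_add2, cc_add3]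
  ring

lemma Gam_smul_right (r : ℝ) (u y : Fin n → ℝ) :
    Gam F V x u (r • y) = r • Gam F V x u y := by
  refine sol_congr_smul fun w => ?_
  simp only [tau, show Kos F V x u (r • y) w = r * Kos F V x u y w by
      simp only [Kos, ww_smul1, ww_smul2, ww_smul3]; ring,
    NN_smul, cc_smul1, cc_smul2, cc_smul3]
  ring

end SolCongr

/-! ### Symmetries, vanishing, and the pointwise tensor identity -/

section Tensor
variable {U : Set (Fin n → ℝ)} {F : (Fin n → ℝ) → (Fin n → ℝ) → ℝ}
  {V : (Fin n → ℝ) → (Fin n → ℝ)}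
variable (hU : IsOpen U) (hF : IsFinslerMetric U F) (hV : ContDiffOn ℝ (⊤ : ℕ∞) V U)
  (hV0 : ∀ x ∈ U, V x ≠ 0)
variable {x : Fin n → ℝ} (hx : x ∈ U)

include hU hF hV0 hx

lemma cc_sym12 (a b c : Fin n → ℝ) : cc F V x a b c = cc F V x b a c := by
  have h := symD3_12 (Ω := U ×ˢ ({(0 : Fin n → ℝ)}ᶜ : Set (Fin n → ℝ)))
    (hQ_all hU hF) (mem_omega hV0 hx) (jr a) (jr b)
  exact congrFun (congrArg DFunLike.coe h) (jr c)

lemma cc_sym23 (a b c : Fin n → ℝ) : cc F V x a b c = cc F V x a c b :=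
  symD3_23 (omega_isOpen hU) (hQ_all hU hF) (mem_omega hV0 hx) _ _ _

lemma cc_vanish1 (b c : Fin n → ℝ) : cc F V x (V x) b c = 0 := by
  refine cartan_vanish (omega_isOpen hU) (hQ_all hU hF)
    (fun z hz => Set.mem_prod.mpr ⟨hx, by simpa using hz⟩) ?_ (hV0 x hx) b c
  intro c hc y
  simp only [QF]
  rw [hF.homog x hx c hc y]
  ring

lemma cc_vanish2 (a c : Fin n → ℝ) : cc F V x a (V x) c = 0 := by
  rw [← cc_sym12 hU hF hV0 hx]; exact cc_vanish1 hU hF hV0 hx a c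

lemma cc_vanish3 (a b : Fin n → ℝ) : cc F V x a b (V x) = 0 := by
  rw [cc_sym23 hU hF hV0 hx]; exact cc_vanish2 hU hF hV0 hx a b

include hV in
lemma ww_sym23 (u y z : Fin n → ℝ) : ww F V x u y z = ww F V x u z y := by
  classical
  have hQ := hQ_all hU hF (F := F)
  have hΩ := omega_isOpen (U := U) hU
  have hVx : ContDiffAt ℝ (⊤ : ℕ∞) V x := hV.contDiffAt (hU.mem_nhds hx)
  have hD2at : ContDiffAt ℝ (⊤ : ℕ∞) (D2 F) (x, V x) :=
    (((hQ _ (mem_omega hV0 hx)).fderiv_right (m := (⊤ : ℕ∞)) (by simp)).fderiv_right (m := (⊤ : ℕ∞))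
      (by simp))
  have hD2V : ContDiffAt ℝ (⊤ : ℕ∞) (fun x' => D2 F (x', V x')) x :=
    hD2at.comp x (contDiffAt_id.prodMk hVx)
  have hdiff : DifferentiableAt ℝ (fun x' => D2 F (x', V x')) x :=
    hD2V.differentiableAt (by simp)
  have hA := (hdiff.hasFDerivAt.clm_apply (hasFDerivAt_const (jr y) x)).clm_apply
    (hasFDerivAt_const (jr z) x)
  have hB := (hdiff.hasFDerivAt.clm_apply (hasFDerivAt_const (jr z) x)).clm_apply
    (hasFDerivAt_const (jr y) x)
  have hev : (fun x' => D2 F (x', V x') (jr y) (jr z))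
      =ᶠ[𝓝 x] (fun x' => D2 F (x', V x') (jr z) (jr y)) := by
    filter_upwards [hU.mem_nhds hx] with x' hx'
    exact symD2 hQ (mem_omega hV0 hx') _ _
  have hEq := (hB.congr_of_eventuallyEq hev).unique hA
  have h2 := congrFun (congrArg DFunLike.coe hEq) u
  simp only [ContinuousLinearMap.add_apply, ContinuousLinearMap.coe_comp',
    Function.comp_apply, ContinuousLinearMap.zero_apply, ContinuousLinearMap.comp_zero,
    ContinuousLinearMap.flip_apply, zero_add] at h2
  simpa [ww, TT] using h2.symm

lemma Gamv_at_v : Gamv F V x (V x) = NvD F V x - fderiv ℝ V x (V x) := by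
  have h1 : Gamv F V x (V x) = sol F V x (fun z => (1 / 2) * Kos F V x (V x) (V x) z) := by
    refine sol_congr fun w => ?_
    rw [cc_vanish2 hU hF hV0 hx]; ring
  rw [h1]; simp [NvD]

lemma NN_at_v : NN F V x (V x) = NvD F V x := by
  rw [NN, Gamv_at_v hU hF hV0 hx]; abel

lemma Gam_spec (u y z : Fin n → ℝ) : bb F V x (Gam F V x u y) z = tau F V x u y z :=
  sol_spec hU hF hV0 hx _ (tau_lin3 u y) z

lemma Gam_at_v (u : Fin n → ℝ) : Gam F V x u (V x) = Gamv F V x u := by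
  refine sol_congr fun w => ?_
  rw [tau, NN_at_v hU hF hV0 hx, cc_vanish2 hU hF hV0 hx, cc_vanish3 hU hF hV0 hx,
    cc_sym23 hU hF hV0 hx (NvD F V x) w u]
  ring

lemma NN_eq_Gam (u : Fin n → ℝ) :
    NN F V x u = fderiv ℝ V x u + Gam F V x u (V x) := by
  rw [Gam_at_v hU hF hV0 hx, NN]

include hV in
lemma Gam_symm (u y : Fin n → ℝ) : Gam F V x u y = Gam F V x y u := by
  refine sol_congr fun w => ?_
  rw [tau, tau]
  have k1 := ww_sym23 hU hF hV hV0 hx u y w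
  have k2 := ww_sym23 hU hF hV hV0 hx y w u
  have k3 := ww_sym23 hU hF hV hV0 hx w u y
  have c1 := cc_sym23 hU hF hV0 hx (NN F V x u) y w
  have c2 := cc_sym23 hU hF hV0 hx (NN F V x y) w u
  have c3 := cc_sym23 hU hF hV0 hx (NN F V x w) u y
  simp only [Kos]
  linarith

include hV in
lemma tensor_id (u y z : Fin n → ℝ) :
    ww F V x u y z = bb F V x (Gam F V x u y) z + bb F V x y (Gam F V x u z)
      + cc F V x (NN F V x u) y z := by
  have hb1 : bb F V x (Gam F V x u y) z = tau F V x u y z := Gam_spec hU hF hV0 hx u y z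
  have hb2 : bb F V x y (Gam F V x u z) = tau F V x u z y := by
    rw [bb_symm hU hF hV0 hx]; exact Gam_spec hU hF hV0 hx u z y
  rw [hb1, hb2, tau, tau]
  have k1 := ww_sym23 hU hF hV hV0 hx u z y
  have k2 := ww_sym23 hU hF hV hV0 hx z y u
  have k3 := ww_sym23 hU hF hV hV0 hx y u z
  have c1 := cc_sym23 hU hF hV0 hx (NN F V x u) z y
  have c2 := cc_sym23 hU hF hV0 hx (NN F V x z) y u
  have c3 := cc_sym23 hU hF hV0 hx (NN F V x y) u z
  simp only [Kos]
  linarith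

end Tensor

/-! ### Smoothness of the construction -/

noncomputable def matCLM : (Fin n → Fin n → ℝ) →L[ℝ] ((Fin n → ℝ) →L[ℝ] (Fin n → ℝ)) :=
  LinearMap.toContinuousLinearMap
    { toFun := fun M => LinearMap.toContinuousLinearMap (Matrix.of M).mulVecLin
      map_add' := by
        intro A B; apply ContinuousLinearMap.ext; intro v
        simp only [LinearMap.coe_toContinuousLinearMap', Matrix.mulVecLin_apply,
          ContinuousLinearMap.add_apply]
        rw [show Matrix.of (A + B) = Matrix.of A + Matrix.of B from rfl, Matrix.add_mulVec]
      map_smul' := by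
        intro c A; apply ContinuousLinearMap.ext; intro v
        simp only [LinearMap.coe_toContinuousLinearMap', Matrix.mulVecLin_apply,
          RingHom.id_apply, ContinuousLinearMap.coe_smul', Pi.smul_apply]
        rw [show Matrix.of (c • A) = c • Matrix.of A from rfl, Matrix.smul_mulVec] }

section Smooth
variable {U : Set (Fin n → ℝ)} {F : (Fin n → ℝ) → (Fin n → ℝ) → ℝ}
  {V : (Fin n → ℝ) → (Fin n → ℝ)}
variable (hU : IsOpen U) (hF : IsFinslerMetric U F) (hV : ContDiffOn ℝ (⊤ : ℕ∞) V U)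
  (hV0 : ∀ x ∈ U, V x ≠ 0)
variable {x : Fin n → ℝ} (hx : x ∈ U)

include hU hF hV hV0 hx

lemma smooth_pair : ContDiffAt ℝ (⊤ : ℕ∞) (fun x' => ((x', V x') : (Fin n → ℝ) × (Fin n → ℝ))) x :=
  contDiffAt_id.prodMk (hV.contDiffAt (hU.mem_nhds hx))

lemma smooth_D2V : ContDiffAt ℝ (⊤ : ℕ∞) (fun x' => D2 F (x', V x')) x := by
  have hD2at : ContDiffAt ℝ (⊤ : ℕ∞) (D2 F) (x, V x) :=
    ((hQ_all hU hF _ (mem_omega hV0 hx)).fderiv_right (m := (⊤ : ℕ∞)) (by simp)).fderiv_right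
      (m := (⊤ : ℕ∞)) (by simp)
  exact hD2at.comp x (smooth_pair hU hF hV hV0 hx)

lemma smooth_D3V : ContDiffAt ℝ (⊤ : ℕ∞) (fun x' => D3 F (x', V x')) x := by
  have hD3at : ContDiffAt ℝ (⊤ : ℕ∞) (D3 F) (x, V x) :=
    (((hQ_all hU hF _ (mem_omega hV0 hx)).fderiv_right (m := (⊤ : ℕ∞)) (by simp)).fderiv_right
      (m := (⊤ : ℕ∞)) (by simp)).fderiv_right (m := (⊤ : ℕ∞)) (by simp)
  exact hD3at.comp x (smooth_pair hU hF hV hV0 hx)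

lemma smooth_TT : ContDiffAt ℝ (⊤ : ℕ∞) (TT F V) x := by
  have h : ContDiffAt ℝ (⊤ : ℕ∞) (fun x' => D2 F (x', V x')) x := smooth_D2V hU hF hV hV0 hx
  -- TT is only defined correctly as fderiv on a neighbourhood in U; but TT F V is
  -- literally the global fderiv of this function, so fderiv_right applies.
  exact h.fderiv_right (m := (⊤ : ℕ∞)) (by simp)

lemma smooth_jr_comp {A : (Fin n → ℝ) → (Fin n → ℝ)} (hA : ContDiffAt ℝ (⊤ : ℕ∞) A x) :
    ContDiffAt ℝ (⊤ : ℕ∞) (fun x' => (jr : (Fin n → ℝ) →L[ℝ] _) (A x')) x :=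
  (jr.contDiff (n := (⊤ : ℕ∞))).comp_contDiffAt x hA

lemma smooth_ww {A B C : (Fin n → ℝ) → (Fin n → ℝ)} (hA : ContDiffAt ℝ (⊤ : ℕ∞) A x)
    (hB : ContDiffAt ℝ (⊤ : ℕ∞) B x) (hC : ContDiffAt ℝ (⊤ : ℕ∞) C x) :
    ContDiffAt ℝ (⊤ : ℕ∞) (fun x' => ww F V x' (A x') (B x') (C x')) x := by
  have h1 : ContDiffAt ℝ (⊤ : ℕ∞) (fun x' => TT F V x' (A x')) x := by
    refine ContDiffAt.clm_apply
      (G := (Fin n → ℝ) × (Fin n → ℝ) →L[ℝ] (Fin n → ℝ) × (Fin n → ℝ) →L[ℝ] ℝ) (f := TT F V) ?_ hA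
    exact smooth_TT hU hF hV hV0 hx
  have h2 := h1.clm_apply (smooth_jr_comp hU hF hV hV0 hx hB)
  exact h2.clm_apply (smooth_jr_comp hU hF hV hV0 hx hC)

lemma smooth_bb {A B : (Fin n → ℝ) → (Fin n → ℝ)} (hA : ContDiffAt ℝ (⊤ : ℕ∞) A x)
    (hB : ContDiffAt ℝ (⊤ : ℕ∞) B x) :
    ContDiffAt ℝ (⊤ : ℕ∞) (fun x' => bb F V x' (A x') (B x')) x := by
  have h1 := (smooth_D2V hU hF hV hV0 hx).clm_apply (smooth_jr_comp hU hF hV hV0 hx hA)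
  exact h1.clm_apply (smooth_jr_comp hU hF hV hV0 hx hB)

lemma smooth_cc {A B C : (Fin n → ℝ) → (Fin n → ℝ)} (hA : ContDiffAt ℝ (⊤ : ℕ∞) A x)
    (hB : ContDiffAt ℝ (⊤ : ℕ∞) B x) (hC : ContDiffAt ℝ (⊤ : ℕ∞) C x) :
    ContDiffAt ℝ (⊤ : ℕ∞) (fun x' => cc F V x' (A x') (B x') (C x')) x := by
  have h1 : ContDiffAt ℝ (⊤ : ℕ∞) (fun x' => D3 F (x', V x') (jr (A x'))) x := by
    refine ContDiffAt.clm_apply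
      (G := (Fin n → ℝ) × (Fin n → ℝ) →L[ℝ] (Fin n → ℝ) × (Fin n → ℝ) →L[ℝ] ℝ)
      (f := fun x' => D3 F (x', V x')) ?_
      (smooth_jr_comp hU hF hV hV0 hx hA)
    exact smooth_D3V hU hF hV hV0 hx
  have h2 := h1.clm_apply (smooth_jr_comp hU hF hV hV0 hx hB)
  exact h2.clm_apply (smooth_jr_comp hU hF hV hV0 hx hC)

lemma smooth_Kos {A B C : (Fin n → ℝ) → (Fin n → ℝ)} (hA : ContDiffAt ℝ (⊤ : ℕ∞) A x)
    (hB : ContDiffAt ℝ (⊤ : ℕ∞) B x) (hC : ContDiffAt ℝ (⊤ : ℕ∞) C x) :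
    ContDiffAt ℝ (⊤ : ℕ∞) (fun x' => Kos F V x' (A x') (B x') (C x')) x := by
  simp only [Kos]
  exact ((smooth_ww hU hF hV hV0 hx hA hB hC).add
    (smooth_ww hU hF hV hV0 hx hB hC hA)).sub (smooth_ww hU hF hV hV0 hx hC hA hB)

lemma smooth_Ginv : ContDiffAt ℝ (⊤ : ℕ∞) (fun x' => Ginv F V x') x := by
  have hGmat : ContDiffAt ℝ (⊤ : ℕ∞) (fun x' => Gmat F V x') x := by
    rw [contDiffAt_pi]; intro i
    rw [contDiffAt_pi]; intro j
    exact smooth_bb hU hF hV hV0 hx contDiffAt_const contDiffAt_const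
  have hGmap : ContDiffAt ℝ (⊤ : ℕ∞) (fun x' => Gmap F V x') x := by
    exact (matCLM.contDiff (n := ((⊤ : ℕ∞) : WithTop ℕ∞))).comp_contDiffAt x hGmat
  obtain ⟨uu, huu⟩ := isUnit_Gmap hU hF hV0 hx
  have hinv : ContDiffAt ℝ (⊤ : ℕ∞) Ring.inverse ((uu : ((Fin n → ℝ) →L[ℝ] (Fin n → ℝ)))) :=
    contDiffAt_ringInverse ℝ uu
  rw [huu] at hinv
  exact hinv.comp x hGmap

lemma smooth_sol {t : (Fin n → ℝ) → (Fin n → ℝ) → ℝ}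
    (ht : ∀ i, ContDiffAt ℝ (⊤ : ℕ∞) (fun x' => t x' (ee i)) x) :
    ContDiffAt ℝ (⊤ : ℕ∞) (fun x' => sol F V x' (t x')) x := by
  simp only [sol]
  exact (smooth_Ginv hU hF hV hV0 hx).clm_apply (contDiffAt_pi.2 ht)

lemma smooth_V : ContDiffAt ℝ (⊤ : ℕ∞) V x := hV.contDiffAt (hU.mem_nhds hx)

lemma smooth_fderivV : ContDiffAt ℝ (⊤ : ℕ∞) (fderiv ℝ V) x :=
  (smooth_V hU hF hV hV0 hx).fderiv_right (m := (⊤ : ℕ∞)) (by simp)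

lemma smooth_NvD : ContDiffAt ℝ (⊤ : ℕ∞) (NvD F V) x := by
  show ContDiffAt ℝ (⊤ : ℕ∞) (fun x' => fderiv ℝ V x' (V x')
    + sol F V x' (fun z => (1 / 2) * Kos F V x' (V x') (V x') z)) x
  refine ((smooth_fderivV hU hF hV hV0 hx).clm_apply (smooth_V hU hF hV hV0 hx)).add ?_
  refine smooth_sol hU hF hV hV0 hx fun i => ?_
  exact (contDiffAt_const (c := (1/2 : ℝ))).mul
    (smooth_Kos hU hF hV hV0 hx (smooth_V hU hF hV hV0 hx) (smooth_V hU hF hV hV0 hx)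
      contDiffAt_const)

lemma smooth_Gamv {A : (Fin n → ℝ) → (Fin n → ℝ)} (hA : ContDiffAt ℝ (⊤ : ℕ∞) A x) :
    ContDiffAt ℝ (⊤ : ℕ∞) (fun x' => Gamv F V x' (A x')) x := by
  simp only [Gamv]
  refine smooth_sol hU hF hV hV0 hx fun i => ?_
  have h1 := smooth_Kos hU hF hV hV0 hx hA (smooth_V hU hF hV hV0 hx)
    (contDiffAt_const (c := ee i))
  have h2 := smooth_cc hU hF hV hV0 hx (smooth_NvD hU hF hV hV0 hx) hA
    (contDiffAt_const (c := ee i))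
  exact (contDiffAt_const (c := (1/2 : ℝ))).mul (h1.sub h2)

lemma smooth_NN {A : (Fin n → ℝ) → (Fin n → ℝ)} (hA : ContDiffAt ℝ (⊤ : ℕ∞) A x) :
    ContDiffAt ℝ (⊤ : ℕ∞) (fun x' => NN F V x' (A x')) x := by
  simp only [NN]
  exact ((smooth_fderivV hU hF hV hV0 hx).clm_apply hA).add (smooth_Gamv hU hF hV hV0 hx hA)

lemma smooth_Gam (u w : Fin n → ℝ) :
    ContDiffAt ℝ (⊤ : ℕ∞) (fun x' => Gam F V x' u w) x := by
  simp only [Gam]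
  refine smooth_sol hU hF hV hV0 hx fun i => ?_
  simp only [tau]
  have h1 := smooth_Kos hU hF hV hV0 hx (contDiffAt_const (c := u)) (contDiffAt_const (c := w))
    (contDiffAt_const (c := ee i))
  have h2 := smooth_cc hU hF hV hV0 hx (smooth_NN hU hF hV hV0 hx (contDiffAt_const (c := u)))
    (contDiffAt_const (c := w)) (contDiffAt_const (c := ee i))
  have h3 := smooth_cc hU hF hV hV0 hx (smooth_NN hU hF hV hV0 hx (contDiffAt_const (c := w)))
    (contDiffAt_const (c := ee i)) (contDiffAt_const (c := u))
  have h4 := smooth_cc hU hF hV hV0 hx (smooth_NN hU hF hV hV0 hx (contDiffAt_const (c := ee i)))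
    (contDiffAt_const (c := u)) (contDiffAt_const (c := w))
  exact (contDiffAt_const (c := (1/2 : ℝ))).mul (((h1.sub h2).sub h3).add h4)

end Smooth

/-! ### Derivative of the metric along vector fields -/

section Field
variable {U : Set (Fin n → ℝ)} {F : (Fin n → ℝ) → (Fin n → ℝ) → ℝ}
  {V : (Fin n → ℝ) → (Fin n → ℝ)}
variable (hU : IsOpen U) (hF : IsFinslerMetric U F) (hV : ContDiffOn ℝ (⊤ : ℕ∞) V U)
  (hV0 : ∀ x ∈ U, V x ≠ 0)
variable {x : Fin n → ℝ} (hx : x ∈ U)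

include hU hF hV hV0 hx

lemma fderiv_gfield {Y Z : (Fin n → ℝ) → (Fin n → ℝ)}
    (hY : ContDiffOn ℝ (⊤ : ℕ∞) Y U) (hZ : ContDiffOn ℝ (⊤ : ℕ∞) Z U) (ξ : Fin n → ℝ) :
    fderiv ℝ (fun y => gF F y (V y) (Y y) (Z y)) x ξ
      = (1 / 2) * ww F V x ξ (Y x) (Z x)
        + (1 / 2) * bb F V x (fderiv ℝ Y x ξ) (Z x)
        + (1 / 2) * bb F V x (Y x) (fderiv ℝ Z x ξ) := by
  have hYx : HasFDerivAt Y (fderiv ℝ Y x) x :=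
    ((hY.contDiffAt (hU.mem_nhds hx)).differentiableAt (by simp)).hasFDerivAt
  have hZx : HasFDerivAt Z (fderiv ℝ Z x) x :=
    ((hZ.contDiffAt (hU.mem_nhds hx)).differentiableAt (by simp)).hasFDerivAt
  have hdiff : DifferentiableAt ℝ (fun x' => D2 F (x', V x')) x :=
    (smooth_D2V hU hF hV hV0 hx).differentiableAt (by simp)
  have hjrY : HasFDerivAt (fun y => (jr : (Fin n → ℝ) →L[ℝ] _) (Y y))
      ((jr : (Fin n → ℝ) →L[ℝ] _).comp (fderiv ℝ Y x)) x := jr.hasFDerivAt.comp x hYx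
  have hjrZ : HasFDerivAt (fun y => (jr : (Fin n → ℝ) →L[ℝ] _) (Z y))
      ((jr : (Fin n → ℝ) →L[ℝ] _).comp (fderiv ℝ Z x)) x := jr.hasFDerivAt.comp x hZx
  have h1 := hdiff.hasFDerivAt.clm_apply hjrY
  have h2 := h1.clm_apply hjrZ
  have h3 := h2.const_mul (1 / 2 : ℝ)
  have heq : (fun y => gF F y (V y) (Y y) (Z y))
      =ᶠ[𝓝 x] (fun y => (1 / 2) * D2 F (y, V y) (jr (Y y)) (jr (Z y))) := by
    filter_upwards [hU.mem_nhds hx] with y hy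
    rw [gF_eq_bb hU hF hV0 hy, bb]
  rw [heq.fderiv_eq, h3.fderiv]
  simp only [ContinuousLinearMap.coe_smul', Pi.smul_apply, ContinuousLinearMap.add_apply,
    ContinuousLinearMap.coe_comp', Function.comp_apply, ContinuousLinearMap.flip_apply,
    smul_eq_mul, ww, TT, bb]
  ring

end Field

/-! ### Final assembly helpers -/

section FinalHelpers
variable {U : Set (Fin n → ℝ)} {F : (Fin n → ℝ) → (Fin n → ℝ) → ℝ}
  {V : (Fin n → ℝ) → (Fin n → ℝ)} {x : Fin n → ℝ}

lemma bb_zero_left (w : Fin n → ℝ) : bb F V x 0 w = 0 := by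
  simp only [bb]; rw [map_zero, map_zero]; rfl

lemma bb_zero_right (u : Fin n → ℝ) : bb F V x u 0 = 0 := by
  simp only [bb]; rw [map_zero, map_zero]

lemma cc_zero1 (b c : Fin n → ℝ) : cc F V x 0 b c = 0 := by
  simp only [cc]
  rw [show (jr : (Fin n → ℝ) →L[ℝ] _) (0 : Fin n → ℝ) = 0 from map_zero _,
    (D3 F (x, V x)).map_zero]
  simp

variable (hU : IsOpen U) (hF : IsFinslerMetric U F) (hV0 : ∀ x ∈ U, V x ≠ 0) (hx : x ∈ U)

include hU hF hV0 hx in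
lemma bb_nondeg (a : Fin n → ℝ) (h : ∀ z, bb F V x a z = 0) : a = 0 := by
  by_contra h0
  exact (ne_of_gt (bb_pos hU hF hV0 hx a h0)) (h a)

end FinalHelpers

noncomputable def GammaLM (F : (Fin n → ℝ) → (Fin n → ℝ) → ℝ)
    (V : (Fin n → ℝ) → (Fin n → ℝ)) (x : Fin n → ℝ) :
    (Fin n → ℝ) →ₗ[ℝ] (Fin n → ℝ) →ₗ[ℝ] (Fin n → ℝ) :=
  LinearMap.mk₂ ℝ (Gam F V x)
    (fun u₁ u₂ y => Gam_add_left u₁ u₂ y)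
    (fun r u y => Gam_smul_left r u y)
    (fun u y₁ y₂ => Gam_add_right u y₁ y₂)
    (fun r u y => Gam_smul_right r u y)

@[simp] lemma GammaLM_apply (F : (Fin n → ℝ) → (Fin n → ℝ) → ℝ)
    (V : (Fin n → ℝ) → (Fin n → ℝ)) (x u y : Fin n → ℝ) :
    GammaLM F V x u y = Gam F V x u y := rfl

end Chern

open Chern in
theorem chern_connection_existsUnique' {n : ℕ} (U : Set (Fin n → ℝ)) (hU : IsOpen U)
    (F : (Fin n → ℝ) → (Fin n → ℝ) → ℝ) (hF : IsFinslerMetric U F)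
    (V : (Fin n → ℝ) → (Fin n → ℝ)) (hV : ContDiffOn ℝ (⊤ : ℕ∞) V U)
    (hV0 : ∀ x ∈ U, V x ≠ 0) :
    ∃ Γ : (Fin n → ℝ) → (Fin n → ℝ) →ₗ[ℝ] (Fin n → ℝ) →ₗ[ℝ] (Fin n → ℝ),
      IsChernConnection U F V Γ ∧
        ∀ Γ' : (Fin n → ℝ) → (Fin n → ℝ) →ₗ[ℝ] (Fin n → ℝ) →ₗ[ℝ] (Fin n → ℝ),
          IsChernConnection U F V Γ' → ∀ x ∈ U, Γ' x = Γ x := by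
  classical
  refine ⟨GammaLM F V, ⟨?_, ?_, ?_⟩, ?_⟩
  · -- symmetry
    intro x hx u w
    simp only [GammaLM_apply]
    exact Gam_symm hU hF hV hV0 hx u w
  · -- smoothness
    intro u w
    intro x hx
    exact ((smooth_Gam hU hF hV hV0 hx u w).congr_of_eventuallyEq
      (by filter_upwards with x'; simp only [GammaLM_apply])).contDiffWithinAt
  · -- compatibility
    intro X Y Z hX hY hZ x hx
    simp only [GammaLM_apply]
    rw [fderiv_gfield hU hF hV hV0 hx hY hZ (X x)]
    rw [gF_eq_bb hU hF hV0 hx, gF_eq_bb hU hF hV0 hx, cartanF_eq_cc hU hF hV0 hx]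
    rw [bb_add_left, bb_add_right]
    rw [show fderiv ℝ V x (X x) + Gam F V x (X x) (V x) = NN F V x (X x) from
      (NN_eq_Gam hU hF hV0 hx (X x)).symm]
    have ht := tensor_id hU hF hV hV0 hx (X x) (Y x) (Z x)
    linarith
  · -- uniqueness
    intro Γ' hΓ' x hx
    obtain ⟨hsym', -, hcomp'⟩ := hΓ'
    have key : ∀ u y z : Fin n → ℝ, ww F V x u y z
        = bb F V x (Γ' x u y) z + bb F V x y (Γ' x u z)
          + cc F V x (fderiv ℝ V x u + Γ' x u (V x)) y z := by
      intro u y z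
      have h := hcomp' (fun _ => u) (fun _ => y) (fun _ => z)
        contDiffOn_const contDiffOn_const contDiffOn_const x hx
      rw [fderiv_gfield hU hF hV hV0 hx contDiffOn_const contDiffOn_const u] at h
      rw [gF_eq_bb hU hF hV0 hx, gF_eq_bb hU hF hV0 hx, cartanF_eq_cc hU hF hV0 hx] at h
      simp only [fderiv_const, fderiv_const_apply, Pi.zero_apply, ContinuousLinearMap.zero_apply,
        bb_zero_left, bb_zero_right, zero_add] at h
      linarith
    set D : (Fin n → ℝ) → (Fin n → ℝ) → (Fin n → ℝ) :=
      fun u y => Γ' x u y - Gam F V x u y with hD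
    have hDsym : ∀ u y, D u y = D y u := by
      intro u y
      simp only [hD, hsym' x hx u y, Gam_symm hU hF hV hV0 hx u y]
    have hsub : ∀ u y z, 0 = bb F V x (D u y) z + bb F V x y (D u z)
        + cc F V x (D u (V x)) y z := by
      intro u y z
      have h1 := key u y z
      have h2 := tensor_id hU hF hV hV0 hx u y z
      have hNu : fderiv ℝ V x u + Γ' x u (V x) = NN F V x u + D u (V x) := by
        simp only [hD]
        rw [NN_eq_Gam hU hF hV0 hx]
        abel
      rw [hNu, cc_add1] at h1
      have e1 : bb F V x (Γ' x u y) z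
          = bb F V x (D u y) z + bb F V x (Gam F V x u y) z := by
        rw [← bb_add_left]
        congr 1
        simp only [hD]
        abel
      have e2 : bb F V x y (Γ' x u z)
          = bb F V x y (D u z) + bb F V x y (Gam F V x u z) := by
        rw [← bb_add_right]
        congr 1
        simp only [hD]
        abel
      linarith
    have hkos : ∀ u y z, 0 = 2 * bb F V x (D u y) z + cc F V x (D u (V x)) y z
        + cc F V x (D y (V x)) z u - cc F V x (D z (V x)) u y := by
      intro u y z
      have h1 := hsub u y z
      have h2 := hsub y z u
      have h3 := hsub z u y
      have b1 : bb F V x z (D y u) = bb F V x (D u y) z := by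
        rw [bb_symm hU hF hV0 hx, hDsym u y]
      have b2 : bb F V x y (D u z) = bb F V x (D z u) y := by
        rw [bb_symm hU hF hV0 hx, hDsym u z]
      have b3 : bb F V x (D y z) u = bb F V x u (D z y) := by
        rw [bb_symm hU hF hV0 hx, hDsym y z]
      linarith
    have hMv : D (V x) (V x) = 0 := by
      refine bb_nondeg hU hF hV0 hx _ fun z => ?_
      have h := hkos (V x) (V x) z
      rw [cc_vanish2 hU hF hV0 hx, cc_vanish3 hU hF hV0 hx, cc_vanish2 hU hF hV0 hx] at h
      linarith
    have hMu : ∀ u, D u (V x) = 0 := by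
      intro u
      refine bb_nondeg hU hF hV0 hx _ fun z => ?_
      have h := hkos u (V x) z
      rw [cc_vanish2 hU hF hV0 hx, hMv, cc_zero1, cc_vanish3 hU hF hV0 hx] at h
      linarith
    have hfin : ∀ u y, D u y = 0 := by
      intro u y
      refine bb_nondeg hU hF hV0 hx _ fun z => ?_
      have h := hkos u y z
      rw [hMu u, hMu y, hMu z, cc_zero1, cc_zero1, cc_zero1] at h
      linarith
    apply LinearMap.ext; intro u
    apply LinearMap.ext; intro y
    have := hfin u y
    simp only [hD, sub_eq_zero] at this
    simpa using this

/-- Existence and uniqueness of the Chern connection: given a Finsler metric `F` on an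
open set `U ⊆ ℝⁿ` and a smooth nonvanishing vector field `V` on `U`, there is a unique
(on `U`) smooth field of symmetric bilinear maps `Γ` whose covariant derivative
`∇^V_X Y = DY[X] + Γ(X,Y)` satisfies the almost-`g`-compatibility identity. -/
theorem chern_connection_existsUnique {n : ℕ} (U : Set (Fin n → ℝ)) (hU : IsOpen U)
    (F : (Fin n → ℝ) → (Fin n → ℝ) → ℝ) (hF : IsFinslerMetric U F)
    (V : (Fin n → ℝ) → (Fin n → ℝ)) (hV : ContDiffOn ℝ (⊤ : ℕ∞) V U)
    (hV0 : ∀ x ∈ U, V x ≠ 0) :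
    ∃ Γ : (Fin n → ℝ) → (Fin n → ℝ) →ₗ[ℝ] (Fin n → ℝ) →ₗ[ℝ] (Fin n → ℝ),
      IsChernConnection U F V Γ ∧
        ∀ Γ' : (Fin n → ℝ) → (Fin n → ℝ) →ₗ[ℝ] (Fin n → ℝ) →ₗ[ℝ] (Fin n → ℝ),
          IsChernConnection U F V Γ' → ∀ x ∈ U, Γ' x = Γ x := by
  exact chern_connection_existsUnique' U hU F hF V hV hV0
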